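/- Let h(z) = (z − z²/2 + z³/6)/(1−z)³ and g(z) = (z²/2 + z³/6)/(1−z)³, and let k = h + conj(g) be the harmonic Koebe function, so that Dk(z) = z·h'(z) − conj(z·g'(z)) = z(1+z)/(1−z)⁴ − z̄²(1+z̄)/(1−z̄)⁴. Then at the point z₀ = (1+2i)/3 ∈ 𝔻 one has k(z₀) = (−17+9i)/24, Dk(z₀) = −15(1+2i)/16, and Dk(z₀)/k(z₀) = 9(−1+43i)/148; in particular Re(Dk(z₀)/k(z₀)) < 0. -/

import Mathlib

open Complex

/-- The analytic part of the harmonic Koebe function. -/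
noncomputable def koebeH (z : ℂ) : ℂ := (z - z ^ 2 / 2 + z ^ 3 / 6) / (1 - z) ^ 3

/-- The co-analytic part of the harmonic Koebe function. -/
noncomputable def koebeG (z : ℂ) : ℂ := (z ^ 2 / 2 + z ^ 3 / 6) / (1 - z) ^ 3

/-- The harmonic Koebe function `k = h + conj g`. -/
noncomputable def koebeK (z : ℂ) : ℂ := koebeH z + (starRingEnd ℂ) (koebeG z)

/-- `Dk(z) = z h'(z) - conj(z g'(z)) = z(1+z)/(1-z)⁴ - z̄²(1+z̄)/(1-z̄)⁴`. -/
noncomputable def koebeDk (z : ℂ) : ℂ :=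
  z * (1 + z) / (1 - z) ^ 4 -
    ((starRingEnd ℂ) z) ^ 2 * (1 + (starRingEnd ℂ) z) / (1 - (starRingEnd ℂ) z) ^ 4

/-- At `z₀ = (1+2i)/3 ∈ 𝔻`: `k(z₀) = (-17+9i)/24`, `Dk(z₀) = -15(1+2i)/16`,
`Dk(z₀)/k(z₀) = 9(-1+43i)/148`, and in particular `Re(Dk(z₀)/k(z₀)) < 0`. -/
theorem stmt3 :
    ‖(1 + 2 * I) / 3‖ < 1 ∧
    koebeK ((1 + 2 * I) / 3) = (-17 + 9 * I) / 24 ∧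
    koebeDk ((1 + 2 * I) / 3) = -15 * (1 + 2 * I) / 16 ∧
    koebeDk ((1 + 2 * I) / 3) / koebeK ((1 + 2 * I) / 3) = 9 * (-1 + 43 * I) / 148 ∧
    (koebeDk ((1 + 2 * I) / 3) / koebeK ((1 + 2 * I) / 3)).re < 0 := by
  have hc : (starRingEnd ℂ) ((1 + 2 * I) / 3) = (1 - 2 * I) / 3 := by
    rw [map_div₀, map_add, map_one, map_mul, Complex.conj_I, map_ofNat, map_ofNat]
    ring
  have h1 : ((1:ℂ) - (1 + 2*I)/3) ≠ 0 := by
    simp [Complex.ext_iff]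
  have h2 : ((1:ℂ) - (1 - 2*I)/3) ≠ 0 := by
    simp [Complex.ext_iff]
  have hH : koebeH ((1 + 2 * I) / 3) = -35/48 := by
    rw [koebeH, div_eq_iff (pow_ne_zero 3 h1)]
    linear_combination ((1:ℂ)/2 - I/6) * Complex.I_sq
  have hG : koebeG ((1 + 2 * I) / 3) = (1 - 18*I)/48 := by
    rw [koebeG, div_eq_iff (pow_ne_zero 3 h1)]
    linear_combination ((1:ℂ)/18 + 7*I/18 - I^2/9) * Complex.I_sq
  have hK : koebeK ((1 + 2 * I) / 3) = (-17 + 9 * I) / 24 := by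
    rw [koebeK, hH, hG, map_div₀, map_sub, map_one, map_mul, Complex.conj_I, map_ofNat,
      map_ofNat]
    ring
  have hDk : koebeDk ((1 + 2 * I) / 3) = -15 * (1 + 2 * I) / 16 := by
    rw [koebeDk, hc]
    rw [div_sub_div _ _ (pow_ne_zero 4 h1) (pow_ne_zero 4 h2), div_eq_iff
      (mul_ne_zero (pow_ne_zero 4 h1) (pow_ne_zero 4 h2))]
    linear_combination ((208:ℂ)/2187 + 1952*I/2187 + 272*I^2/729 + 608*I^3/243
      - 368*I^4/729 - 224*I^5/729 + 80*I^6/2187 + 160*I^7/2187) * Complex.I_sq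
  have hKne : ((-17 + 9 * I) / 24 : ℂ) ≠ 0 := by
    simp [Complex.ext_iff]
  have habs : ‖(1 + 2 * I) / 3‖ < 1 := by
    have h5 : ‖(1 + 2 * I) / 3‖ ^ 2 = 5/9 := by
      rw [Complex.sq_norm]
      simp [Complex.normSq_apply, Complex.div_re, Complex.div_im]
      norm_num
    nlinarith [norm_nonneg ((1 + 2 * I) / 3)]
  have hr : koebeDk ((1 + 2 * I) / 3) / koebeK ((1 + 2 * I) / 3) = 9 * (-1 + 43 * I) / 148 := by
    rw [hDk, hK, div_eq_iff hKne]
    linear_combination (-1161/1184 : ℂ) * Complex.I_sq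
  have hre : (koebeDk ((1 + 2 * I) / 3) / koebeK ((1 + 2 * I) / 3)).re < 0 := by
    rw [hr]
    simp [Complex.div_re, Complex.normSq_apply]
    norm_num
  exact ⟨habs, hK, hDk, hr, hre⟩
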